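/- arXiv:2309.06264 — 3 statements merged into one kernel-verified Lean document; each statement's English description precedes it below -/
import Mathlib

section
/- Suppose two n-dimensional distributions (μ₁, Σ₁) and (μ₂, Σ₂) satisfy the allometric extension relationship: the unit leading eigenvector γ₁ of Σ₁ equals that of Σ₂ and equals β(μ₁ − μ₂) for some β ∈ ℝ, and λ₁(Σᵢ) > λ₂(Σᵢ) for i = 1, 2. Then γ₁ is an eigenvector of the mixture covariance Σ = π₁Σ₁ + π₂Σ₂ + π₁π₂(μ₁ − μ₂)(μ₁ − μ₂)ᵀ with eigenvalue π₁λ₁(Σ₁) + π₂λ₁(Σ₂) + π₁π₂/β², where π₁, π₂ > 0 and π₁ + π₂ = 1. -/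
open Matrix

/-- Under the allometric extension relationship, the common unit leading eigenvector `γ₁`
of `Σ₁` and `Σ₂` is an eigenvector of the mixture covariance
`Σ = π₁Σ₁ + π₂Σ₂ + π₁π₂(μ₁ − μ₂)(μ₁ − μ₂)ᵀ` with eigenvalue
`π₁λ₁(Σ₁) + π₂λ₁(Σ₂) + π₁π₂/β²`. -/
theorem stmt_2 {n : ℕ} (S₁ S₂ : Matrix (Fin n) (Fin n) ℝ)
    (hS₁ : S₁.PosDef) (hS₂ : S₂.PosDef)
    (μ₁ μ₂ γ₁ : Fin n → ℝ) (β : ℝ)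
    (l₁ l₂ m₁ m₂ : ℝ)  -- λ₁(Σ₁), λ₁(Σ₂), λ₂(Σ₁), λ₂(Σ₂)
    (hgap₁ : m₁ < l₁) (hgap₂ : m₂ < l₂)
    (hunit : γ₁ ⬝ᵥ γ₁ = 1)
    (heig₁ : S₁.mulVec γ₁ = l₁ • γ₁) (heig₂ : S₂.mulVec γ₁ = l₂ • γ₁)
    (hallo : γ₁ = β • (μ₁ - μ₂))
    (π₁ π₂ : ℝ) (hπ₁ : 0 < π₁) (hπ₂ : 0 < π₂) (hsum : π₁ + π₂ = 1) :
    (π₁ • S₁ + π₂ • S₂ + (π₁ * π₂) • Matrix.vecMulVec (μ₁ - μ₂) (μ₁ - μ₂)).mulVec γ₁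
      = (π₁ * l₁ + π₂ * l₂ + π₁ * π₂ / β ^ 2) • γ₁ := by
  have hβ : β ≠ 0 := by
    rintro rfl
    simp [hallo, dotProduct] at hunit
  have hμ : μ₁ - μ₂ = β⁻¹ • γ₁ := by
    rw [hallo, smul_smul, inv_mul_cancel₀ hβ, one_smul]
  have hvv : (Matrix.vecMulVec (μ₁ - μ₂) (μ₁ - μ₂)).mulVec γ₁ = (β ^ 2)⁻¹ • γ₁ := by
    funext i
    simp only [mulVec, dotProduct, vecMulVec_apply, hμ, Pi.smul_apply, smul_eq_mul]
    rw [show (∑ x, β⁻¹ * γ₁ i * (β⁻¹ * γ₁ x) * γ₁ x)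
        = (β⁻¹ * γ₁ i * β⁻¹) * ∑ x, γ₁ x * γ₁ x from by
      rw [Finset.mul_sum]; exact Finset.sum_congr rfl fun j _ => by ring]
    rw [show (∑ x, γ₁ x * γ₁ x) = 1 from hunit]
    ring
  simp only [add_mulVec, smul_mulVec, heig₁, heig₂, hvv, smul_smul]
  rw [← add_smul, ← add_smul]
  congr 1 <;> field_simp
end

section
/- Under the allometric extension relationship, the second largest eigenvalue of the mixture covariance matrix Σ satisfies λ₂(Σ) ≤ π₁λ₂(Σ₁) + π₂λ₂(Σ₂). -/
open Matrix

/-- Under the allometric extension relationship, the second largest eigenvalue of the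
mixture covariance `Σ = π₁Σ₁ + π₂Σ₂ + (π₁π₂/β²)γ₁γ₁ᵀ` is at most
`π₁λ₂(Σ₁) + π₂λ₂(Σ₂)`: the quadratic form of `Σ` on the orthogonal complement of the
leading eigenvector `γ₁` is bounded by `π₁λ₂(Σ₁) + π₂λ₂(Σ₂)` (by the min-max principle
this bounds `λ₂(Σ)`). -/
theorem stmt_4 {n : ℕ} (S₁ S₂ : Matrix (Fin n) (Fin n) ℝ)
    (hS₁ : S₁.PosDef) (hS₂ : S₂.PosDef)
    (μ₁ μ₂ γ₁ : Fin n → ℝ) (β : ℝ)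
    (l₁ l₂ m₁ m₂ : ℝ)  -- λ₁(Σ₁), λ₁(Σ₂), λ₂(Σ₁), λ₂(Σ₂)
    (hgap₁ : m₁ < l₁) (hgap₂ : m₂ < l₂)
    (hunit : γ₁ ⬝ᵥ γ₁ = 1)
    (heig₁ : S₁.mulVec γ₁ = l₁ • γ₁) (heig₂ : S₂.mulVec γ₁ = l₂ • γ₁)
    (hperp₁ : ∀ ξ : Fin n → ℝ, ξ ⬝ᵥ γ₁ = 0 → ξ ⬝ᵥ S₁.mulVec ξ ≤ m₁ * (ξ ⬝ᵥ ξ))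
    (hperp₂ : ∀ ξ : Fin n → ℝ, ξ ⬝ᵥ γ₁ = 0 → ξ ⬝ᵥ S₂.mulVec ξ ≤ m₂ * (ξ ⬝ᵥ ξ))
    (hallo : γ₁ = β • (μ₁ - μ₂))
    (π₁ π₂ : ℝ) (hπ₁ : 0 < π₁) (hπ₂ : 0 < π₂) (hsum : π₁ + π₂ = 1) :
    ∀ ξ : Fin n → ℝ, ξ ⬝ᵥ γ₁ = 0 →
      ξ ⬝ᵥ (π₁ • S₁ + π₂ • S₂ + (π₁ * π₂ / β ^ 2) • Matrix.vecMulVec γ₁ γ₁).mulVec ξ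
        ≤ (π₁ * m₁ + π₂ * m₂) * (ξ ⬝ᵥ ξ) := by
  intro ξ hξ
  have h1 := hperp₁ ξ hξ
  have h2 := hperp₂ ξ hξ
  have hvv : ξ ⬝ᵥ (Matrix.vecMulVec γ₁ γ₁).mulVec ξ = 0 := by
    simp only [Matrix.mulVec, Matrix.vecMulVec_apply, dotProduct]
    have : ∑ i, ξ i * γ₁ i = 0 := hξ
    calc ∑ i, ξ i * ∑ j, γ₁ i * γ₁ j * ξ j
        = (∑ i, ξ i * γ₁ i) * ∑ j, γ₁ j * ξ j := by
          simp only [Finset.sum_mul, Finset.mul_sum]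
          exact Finset.sum_congr rfl fun i _ =>
            Finset.sum_congr rfl fun j _ => by ring
      _ = 0 := by rw [this, zero_mul]
  rw [Matrix.add_mulVec, Matrix.add_mulVec, Matrix.smul_mulVec,
    Matrix.smul_mulVec, Matrix.smul_mulVec, dotProduct_add, dotProduct_add,
    dotProduct_smul, dotProduct_smul, dotProduct_smul, hvv, smul_zero, add_zero,
    smul_eq_mul, smul_eq_mul]
  nlinarith [mul_le_mul_of_nonneg_left h1 hπ₁.le, mul_le_mul_of_nonneg_left h2 hπ₂.le]
end

section
/- Let X = θμ + g^(θ) as in the allometric extension mixture model (θ Rademacher independent of g^(1) ~ N(0,Σ₁), g^(−1) ~ N(0,Σ₂)). Then X is sub-gaussian: with K = sqrt(32/(4 − e)), for every x ∈ ℝⁿ one has ‖⟨X, x⟩‖_{ψ₂} ≤ K ‖⟨X, x⟩‖_{L²}, where ‖Y‖_{ψ₂} = inf{t > 0 : E[exp(Y²/t²)] ≤ 2}. -/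
/-!
On `{θ = 1}` the projection `⟨X, x⟩` is `m + Z₁` and on `{θ = -1}` it is `-m + Z₂`, where
`m = ⟨μ, x⟩` and `Zᵢ ~ N(0, vᵢ)` with `vᵢ = xᵀ Σᵢ x`. Independence of `θ` from the Gaussians
makes every expectation `E F(⟨X, x⟩)` the average of those under `N(m, v₁)` and `N(-m, v₂)`;
in particular `σ² := E⟨X, x⟩² = m² + (v₁ + v₂) / 2`, so `m² ≤ σ²` and `vᵢ ≤ 2σ²`.
By `(a + z)² ≤ 2a² + 2z²` and the exact Gaussian integral `E exp(c Z²) = (1 - 2cv)^(-1/2)`,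
`E exp(⟨X, x⟩² / t²) ≤ exp(2m²/t²) (1 - 8σ²/t²)^(-1/2)`, and `t² ≥ 32σ² / (4 - e)` makes the
first factor at most `exp(1/2) = √e` and the second at most `2 / √e`.
-/

open MeasureTheory ProbabilityTheory Matrix Real
open scoped NNReal

/-- The sub-gaussian norm of a real random variable `Y` (w.r.t. `P`):
`inf {t > 0 : E[exp(Y²/t²)] ≤ 2}`. -/
noncomputable def subGaussianNorm {Ω : Type*} [MeasurableSpace Ω] (P : Measure Ω)
    (Y : Ω → ℝ) : ℝ :=
  sInf {t : ℝ | 0 < t ∧ ∫ ω, Real.exp (Y ω ^ 2 / t ^ 2) ∂P ≤ 2}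

lemma subGaussianNorm_le_of_forall_lt {Ω : Type*} [MeasurableSpace Ω] {P : Measure Ω}
    {Y : Ω → ℝ} {c : ℝ} (hc : 0 ≤ c) (h : ∀ t, c < t → ∫ ω, rexp (Y ω ^ 2 / t ^ 2) ∂P ≤ 2) :
    subGaussianNorm P Y ≤ c :=
  calc subGaussianNorm P Y ≤ sInf (Set.Ioi c) :=
        csInf_le_csInf ⟨0, fun _ ht ↦ ht.1.le⟩ Set.nonempty_Ioi
          fun t ht ↦ ⟨hc.trans_lt ht, h t ht⟩
    _ = c := csInf_Ioi

section Numerics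

variable {c s v : ℝ}

lemma exp_one_div_four_le_one_sub (hc : 0 ≤ c) (hcs : 32 * c * s ≤ 4 - rexp 1)
    (hv : v ≤ 2 * s) : rexp 1 / 4 ≤ 1 - 4 * c * v := by
  nlinarith [mul_le_mul_of_nonneg_left hv hc]

lemma four_mul_mul_lt_one (hc : 0 ≤ c) (hcs : 32 * c * s ≤ 4 - rexp 1) (hv : v ≤ 2 * s) :
    4 * c * v < 1 := by
  linarith [exp_one_div_four_le_one_sub hc hcs hv, exp_pos 1]

lemma exp_mul_sq_mul_inv_sqrt_le_two {a : ℝ} (hc : 0 ≤ c) (hcs : 32 * c * s ≤ 4 - rexp 1)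
    (ha : a ^ 2 ≤ s) (hv : v ≤ 2 * s) :
    rexp (2 * c * a ^ 2) * (√(1 - 4 * c * v))⁻¹ ≤ 2 := by
  have hD := exp_one_div_four_le_one_sub hc hcs hv
  rw [← div_eq_mul_inv, div_le_iff₀ (Real.sqrt_pos.2 (by linarith [exp_pos 1]))]
  calc rexp (2 * c * a ^ 2) ≤ rexp (1 / 2) := by
        rw [Real.exp_le_exp]
        nlinarith [mul_le_mul_of_nonneg_left ha hc, exp_pos 1]
    _ = 2 * √(rexp 1 / 4) := by
        rw [Real.sqrt_div' _ (by norm_num : (0 : ℝ) ≤ 4), ← Real.exp_half,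
          show (4 : ℝ) = 2 ^ 2 by norm_num, Real.sqrt_sq (by norm_num)]
        ring_nf
    _ ≤ 2 * √(1 - 4 * c * v) := by gcongr

lemma mul_inv_sq_mul_le_of_sqrt_mul_sqrt_lt {a b t : ℝ} (hb : 0 < b) (hs : 0 ≤ s)
    (h : √(a / b) * √s < t) : a * (t ^ 2)⁻¹ * s ≤ b := by
  have ht : 0 < t := (by positivity : 0 ≤ √(a / b) * √s).trans_lt h
  rw [← Real.sqrt_mul' _ hs, Real.sqrt_lt' ht, div_mul_eq_mul_div, div_lt_iff₀ hb] at h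
  rw [mul_right_comm, ← div_eq_mul_inv, div_le_iff₀ (by positivity)]
  linarith

lemma exp_mul_sq_add_le (hc : 0 ≤ c) (m z : ℝ) :
    rexp (c * (m + z) ^ 2) ≤ rexp (2 * c * m ^ 2) * rexp (2 * c * z ^ 2) := by
  rw [← Real.exp_add, Real.exp_le_exp]
  nlinarith [mul_nonneg hc (sq_nonneg (m - z))]

end Numerics

namespace ProbabilityTheory

section Gaussian

variable {v : ℝ≥0} {c : ℝ}

lemma gaussianPDFReal_zero_mul_exp_mul_sq (hv : v ≠ 0) (c z : ℝ) :
    gaussianPDFReal 0 v z * rexp (c * z ^ 2)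
      = (√(2 * π * v))⁻¹ * rexp (-(1 / (2 * v) - c) * z ^ 2) := by
  have : (v : ℝ) ≠ 0 := by exact_mod_cast hv
  rw [gaussianPDFReal, mul_assoc, ← Real.exp_add]
  congr 2
  field_simp
  ring

lemma integrable_exp_mul_sq_gaussianReal_zero (h : 2 * c * v < 1) :
    Integrable (fun z ↦ rexp (c * z ^ 2)) (gaussianReal 0 v) := by
  by_cases hv : v = 0
  · rw [hv, gaussianReal_zero_var]
    exact integrable_dirac (by simp)
  rw [gaussianReal_of_var_ne_zero _ hv,
    integrable_withDensity_iff_integrable_smul' (measurable_gaussianPDF _ _)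
      (ae_of_all _ fun _ ↦ gaussianPDF_lt_top)]
  have hb : 0 < 1 / (2 * v) - c := by
    rw [sub_pos, lt_div_iff₀ (by positivity)]
    linarith
  simp_rw [toReal_gaussianPDF, smul_eq_mul, gaussianPDFReal_zero_mul_exp_mul_sq hv]
  exact (integrable_exp_neg_mul_sq hb).const_mul _

-- For `2cv ≥ 1` both sides are the junk value `0`.
lemma integral_exp_mul_sq_gaussianReal_zero :
    ∫ z, rexp (c * z ^ 2) ∂gaussianReal 0 v = (√(1 - 2 * c * v))⁻¹ := by
  by_cases hv : v = 0
  · simp [hv, gaussianReal_zero_var]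
  rw [integral_gaussianReal_eq_integral_smul hv]
  simp_rw [smul_eq_mul, gaussianPDFReal_zero_mul_exp_mul_sq hv]
  rw [integral_const_mul, integral_gaussian, ← Real.sqrt_inv, ← Real.sqrt_mul (by positivity),
    ← Real.sqrt_inv]
  congr 1
  field_simp

lemma gaussianReal_eq_map_const_add (m : ℝ) (v : ℝ≥0) :
    gaussianReal m v = (gaussianReal 0 v).map (m + ·) := by
  rw [gaussianReal_map_const_add, zero_add]

lemma integrable_exp_mul_sq_const_add_gaussianReal (hc : 0 ≤ c) (h : 4 * c * v < 1) (m : ℝ) :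
    Integrable (fun z ↦ rexp (c * (m + z) ^ 2)) (gaussianReal 0 v) :=
  ((integrable_exp_mul_sq_gaussianReal_zero (c := 2 * c) (by linarith)).const_mul
    (rexp (2 * c * m ^ 2))).mono' (by fun_prop)
    (ae_of_all _ fun z ↦ by simpa using exp_mul_sq_add_le hc m z)

lemma integrable_exp_mul_sq_gaussianReal (hc : 0 ≤ c) (h : 4 * c * v < 1) (m : ℝ) :
    Integrable (fun z ↦ rexp (c * z ^ 2)) (gaussianReal m v) := by
  rw [gaussianReal_eq_map_const_add, integrable_map_measure (by fun_prop) (by fun_prop)]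
  exact integrable_exp_mul_sq_const_add_gaussianReal hc h m

lemma integral_exp_mul_sq_gaussianReal_le (hc : 0 ≤ c) (h : 4 * c * v < 1) (m : ℝ) :
    ∫ z, rexp (c * z ^ 2) ∂gaussianReal m v ≤ rexp (2 * c * m ^ 2) * (√(1 - 4 * c * v))⁻¹ := by
  have h2c : 2 * (2 * c) * v < 1 := by linarith
  rw [gaussianReal_eq_map_const_add, integral_map (by fun_prop) (by fun_prop),
    show 4 * c * v = 2 * (2 * c) * v by ring, ← integral_exp_mul_sq_gaussianReal_zero,
    ← integral_const_mul]
  exact integral_mono (integrable_exp_mul_sq_const_add_gaussianReal hc h m)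
    ((integrable_exp_mul_sq_gaussianReal_zero h2c).const_mul _) (exp_mul_sq_add_le hc m)

lemma integral_sq_gaussianReal (m : ℝ) (v : ℝ≥0) :
    ∫ z, z ^ 2 ∂gaussianReal m v = m ^ 2 + v := by
  have h := variance_eq_sub (memLp_id_gaussianReal (μ := m) (v := v) 2)
  simp only [variance_id_gaussianReal, id_eq, Pi.pow_apply, integral_id_gaussianReal] at h
  linarith

lemma integral_exp_mul_sq_gaussianReal_le_two {s a : ℝ} (hc : 0 ≤ c)
    (hcs : 32 * c * s ≤ 4 - rexp 1) (ha : a ^ 2 ≤ s) (hv : v ≤ 2 * s) :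
    ∫ z, rexp (c * z ^ 2) ∂gaussianReal a v ≤ 2 :=
  (integral_exp_mul_sq_gaussianReal_le hc (four_mul_mul_lt_one hc hcs hv) a).trans
    (exp_mul_sq_mul_inv_sqrt_le_two hc hcs ha hv)

lemma hasLaw_const_add_of_map_eq_gaussianReal {Ω : Type*} [MeasurableSpace Ω] {P : Measure Ω}
    [IsProbabilityMeasure P] {Z : Ω → ℝ} (hZ : P.map Z = gaussianReal 0 v) (a : ℝ) :
    HasLaw (fun ω ↦ a + Z ω) (gaussianReal a v) P := by
  simpa using gaussianReal_const_add
    ⟨.of_map_ne_zero (by rw [hZ]; exact IsProbabilityMeasure.ne_zero _), hZ⟩ a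

end Gaussian

section RademacherMixture

variable {Ω : Type*} [MeasurableSpace Ω]

structure IsRademacherMixture (P : Measure Ω) (θ W₁ W₂ Y : Ω → ℝ) : Prop where
  measurable_sign : Measurable θ
  measure_sign_eq_one : P {ω | θ ω = 1} = 1 / 2
  measure_sign_eq_neg_one : P {ω | θ ω = -1} = 1 / 2
  indepFun : IndepFun θ (fun ω ↦ (W₁ ω, W₂ ω)) P
  eq_of_sign_eq_one : ∀ ω, θ ω = 1 → Y ω = W₁ ω
  eq_of_sign_eq_neg_one : ∀ ω, θ ω = -1 → Y ω = W₂ ω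

lemma integral_indicator_eq_mul_of_indepFun {P : Measure Ω} {θ V : Ω → ℝ} (hθ : Measurable θ)
    (hind : IndepFun θ V P) (hV : AEStronglyMeasurable V P) (c : ℝ) :
    ∫ ω, {ω | θ ω = c}.indicator V ω ∂P = P.real {ω | θ ω = c} * ∫ ω, V ω ∂P := by
  have hc : MeasurableSet {ω | θ ω = c} := hθ (measurableSet_singleton c)
  have hφ : Measurable (({c} : Set ℝ).indicator (1 : ℝ → ℝ)) :=
    measurable_const.indicator (measurableSet_singleton c)
  have hsplit : {ω | θ ω = c}.indicator V
      = fun ω ↦ ({c} : Set ℝ).indicator 1 (θ ω) * V ω := by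
    ext ω
    by_cases h : θ ω = c <;> simp [Set.indicator, h]
  rw [hsplit, ← integral_indicator_one hc]
  exact (hind.comp hφ measurable_id).integral_fun_mul_eq_mul_integral
    (hφ.comp hθ).aestronglyMeasurable hV

namespace IsRademacherMixture

variable {P : Measure Ω} {θ W₁ W₂ Y : Ω → ℝ}

lemma comp (h : IsRademacherMixture P θ W₁ W₂ Y) {F : ℝ → ℝ} (hF : Measurable F) :
    IsRademacherMixture P θ (fun ω ↦ F (W₁ ω)) (fun ω ↦ F (W₂ ω)) (fun ω ↦ F (Y ω)) where
  measurable_sign := h.measurable_sign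
  measure_sign_eq_one := h.measure_sign_eq_one
  measure_sign_eq_neg_one := h.measure_sign_eq_neg_one
  indepFun := h.indepFun.comp measurable_id (hF.prodMap hF)
  eq_of_sign_eq_one ω hω := by rw [h.eq_of_sign_eq_one ω hω]
  eq_of_sign_eq_neg_one ω hω := by rw [h.eq_of_sign_eq_neg_one ω hω]

variable [IsProbabilityMeasure P]

lemma integral_eq (h : IsRademacherMixture P θ W₁ W₂ Y) (hi₁ : Integrable W₁ P)
    (hi₂ : Integrable W₂ P) : ∫ ω, Y ω ∂P = (∫ ω, W₁ ω ∂P + ∫ ω, W₂ ω ∂P) / 2 := by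
  set A := {ω | θ ω = 1}
  set B := {ω | θ ω = -1}
  have hA : MeasurableSet A := h.measurable_sign (measurableSet_singleton 1)
  have hB : MeasurableSet B := h.measurable_sign (measurableSet_singleton (-1))
  have hAB : Disjoint A B := Set.disjoint_left.2 fun ω h₁ h₂ ↦ by
    have : (1 : ℝ) = -1 := h₁.symm.trans h₂
    norm_num at this
  have hcover : ∀ᵐ ω ∂P, ω ∈ A ∪ B := by
    rw [ae_mem_iff_measure_eq (hA.union hB).nullMeasurableSet, measure_univ,
      measure_union hAB hB, h.measure_sign_eq_one, h.measure_sign_eq_neg_one, ENNReal.add_halves]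
  have hY : Y =ᵐ[P] fun ω ↦ A.indicator W₁ ω + B.indicator W₂ ω := by
    filter_upwards [hcover] with ω hω
    rcases hω with hω | hω
    · simp [hω, Set.indicator_of_notMem (Set.disjoint_left.1 hAB hω), h.eq_of_sign_eq_one ω hω]
    · simp [hω, Set.indicator_of_notMem (Set.disjoint_right.1 hAB hω),
        h.eq_of_sign_eq_neg_one ω hω]
  rw [integral_congr_ae hY, integral_add (hi₁.indicator hA) (hi₂.indicator hB),
    integral_indicator_eq_mul_of_indepFun (V := W₁) h.measurable_sign
      (h.indepFun.comp measurable_id measurable_fst) hi₁.aestronglyMeasurable,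
    integral_indicator_eq_mul_of_indepFun (V := W₂) h.measurable_sign
      (h.indepFun.comp measurable_id measurable_snd) hi₂.aestronglyMeasurable,
    measureReal_def, measureReal_def, h.measure_sign_eq_one, h.measure_sign_eq_neg_one,
    ENNReal.toReal_div, ENNReal.toReal_one, ENNReal.toReal_ofNat]
  ring

lemma integral_comp_eq (h : IsRademacherMixture P θ W₁ W₂ Y) {ν₁ ν₂ : Measure ℝ}
    (hW₁ : HasLaw W₁ ν₁ P) (hW₂ : HasLaw W₂ ν₂ P) {F : ℝ → ℝ} (hF : Measurable F)
    (hi₁ : Integrable F ν₁) (hi₂ : Integrable F ν₂) :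
    ∫ ω, F (Y ω) ∂P = (∫ z, F z ∂ν₁ + ∫ z, F z ∂ν₂) / 2 := by
  rw [← hW₁.map_eq] at hi₁
  rw [← hW₂.map_eq] at hi₂
  rw [← hW₁.integral_comp hF.aestronglyMeasurable, ← hW₂.integral_comp hF.aestronglyMeasurable]
  exact (h.comp hF).integral_eq
    ((integrable_map_measure hF.aestronglyMeasurable hW₁.aemeasurable).1 hi₁)
    ((integrable_map_measure hF.aestronglyMeasurable hW₂.aemeasurable).1 hi₂)

variable {m : ℝ} {v₁ v₂ : ℝ≥0}

lemma integral_sq_eq (h : IsRademacherMixture P θ W₁ W₂ Y)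
    (hW₁ : HasLaw W₁ (gaussianReal m v₁) P) (hW₂ : HasLaw W₂ (gaussianReal (-m) v₂) P) :
    ∫ ω, Y ω ^ 2 ∂P = m ^ 2 + (v₁ + v₂) / 2 := by
  rw [h.integral_comp_eq (F := fun z ↦ z ^ 2) hW₁ hW₂ (by fun_prop)
    (memLp_id_gaussianReal 2).integrable_sq (memLp_id_gaussianReal 2).integrable_sq,
    integral_sq_gaussianReal, integral_sq_gaussianReal]
  ring

lemma subGaussianNorm_le (h : IsRademacherMixture P θ W₁ W₂ Y)
    (hW₁ : HasLaw W₁ (gaussianReal m v₁) P) (hW₂ : HasLaw W₂ (gaussianReal (-m) v₂) P) :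
    subGaussianNorm P Y ≤ √(32 / (4 - rexp 1)) * √(∫ ω, Y ω ^ 2 ∂P) := by
  have hσ2 := h.integral_sq_eq hW₁ hW₂
  set σ2 := ∫ ω, Y ω ^ 2 ∂P
  have hm : m ^ 2 ≤ σ2 := by rw [hσ2]; linarith [v₁.2, v₂.2]
  have hm' : (-m) ^ 2 ≤ σ2 := by rwa [neg_sq]
  have hv₁ : (v₁ : ℝ) ≤ 2 * σ2 := by rw [hσ2]; nlinarith [v₂.2]
  have hv₂ : (v₂ : ℝ) ≤ 2 * σ2 := by rw [hσ2]; nlinarith [v₁.2]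
  refine subGaussianNorm_le_of_forall_lt (by positivity) fun t ht ↦ ?_
  have hcs := mul_inv_sq_mul_le_of_sqrt_mul_sqrt_lt (by linarith [Real.exp_one_lt_d9])
    (by rw [hσ2]; positivity) ht
  have hc : 0 ≤ (t ^ 2)⁻¹ := by positivity
  simp_rw [div_eq_inv_mul]
  rw [h.integral_comp_eq hW₁ hW₂ (by fun_prop)
    (integrable_exp_mul_sq_gaussianReal hc (four_mul_mul_lt_one hc hcs hv₁) m)
    (integrable_exp_mul_sq_gaussianReal hc (four_mul_mul_lt_one hc hcs hv₂) (-m))]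
  linarith [integral_exp_mul_sq_gaussianReal_le_two hc hcs hm hv₁,
    integral_exp_mul_sq_gaussianReal_le_two hc hcs hm' hv₂]

end IsRademacherMixture

end RademacherMixture

end ProbabilityTheory

theorem stmt_8_general {Ω : Type*} [MeasurableSpace Ω] (P : Measure Ω) [IsProbabilityMeasure P]
    {n : ℕ} (μ : Fin n → ℝ) (S₁ S₂ : Matrix (Fin n) (Fin n) ℝ)
    (θ : Ω → ℝ) (hθmeas : Measurable θ)
    (hθ1 : P {ω | θ ω = 1} = 1/2) (hθ2 : P {ω | θ ω = -1} = 1/2)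
    (g₁ g₂ : Ω → (Fin n → ℝ))
    (hg₁ : ∀ x : Fin n → ℝ,
      Measure.map (fun ω => x ⬝ᵥ g₁ ω) P = gaussianReal 0 (Real.toNNReal (x ⬝ᵥ S₁.mulVec x)))
    (hg₂ : ∀ x : Fin n → ℝ,
      Measure.map (fun ω => x ⬝ᵥ g₂ ω) P = gaussianReal 0 (Real.toNNReal (x ⬝ᵥ S₂.mulVec x)))
    (hindep : IndepFun θ (fun ω => (g₁ ω, g₂ ω)) P)
    (X : Ω → (Fin n → ℝ))
    (hX : ∀ ω, X ω = θ ω • μ + (if θ ω = 1 then g₁ ω else g₂ ω))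
    (x : Fin n → ℝ) :
    subGaussianNorm P (fun ω => x ⬝ᵥ X ω)
      ≤ Real.sqrt (32 / (4 - Real.exp 1)) * Real.sqrt (∫ ω, (x ⬝ᵥ X ω) ^ 2 ∂P) := by
  set m := x ⬝ᵥ μ
  have hψ : Measurable fun p : (Fin n → ℝ) × (Fin n → ℝ) ↦ (m + x ⬝ᵥ p.1, -m + x ⬝ᵥ p.2) := by
    fun_prop
  have hmix : IsRademacherMixture P θ (fun ω ↦ m + x ⬝ᵥ g₁ ω) (fun ω ↦ -m + x ⬝ᵥ g₂ ω)
      (fun ω ↦ x ⬝ᵥ X ω) :=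
    { measurable_sign := hθmeas
      measure_sign_eq_one := hθ1
      measure_sign_eq_neg_one := hθ2
      indepFun := hindep.comp measurable_id hψ
      eq_of_sign_eq_one := fun ω hω ↦ by simp [hX, hω, m]
      eq_of_sign_eq_neg_one := fun ω hω ↦ by norm_num [hX, hω, m] }
  exact hmix.subGaussianNorm_le (hasLaw_const_add_of_map_eq_gaussianReal (hg₁ x) m)
    (hasLaw_const_add_of_map_eq_gaussianReal (hg₂ x) (-m))

/-- The mixture `X = θμ + g^(θ)` of the allometric extension model is sub-gaussian:
with `K = √(32/(4 − e))`, for every `x ∈ ℝⁿ`,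
`‖⟨X,x⟩‖_{ψ₂} ≤ K ‖⟨X,x⟩‖_{L²}`. -/
theorem stmt_8 {Ω : Type*} [MeasurableSpace Ω] (P : Measure Ω) [IsProbabilityMeasure P]
    {n : ℕ} (μ : Fin n → ℝ) (S₁ S₂ : Matrix (Fin n) (Fin n) ℝ)
    (hS₁ : S₁.PosDef) (hS₂ : S₂.PosDef)
    (θ : Ω → ℝ) (hθmeas : Measurable θ)
    (hθ1 : P {ω | θ ω = 1} = 1/2) (hθ2 : P {ω | θ ω = -1} = 1/2)
    (g₁ g₂ : Ω → (Fin n → ℝ)) (hg₁meas : Measurable g₁) (hg₂meas : Measurable g₂)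
    (hg₁ : ∀ x : Fin n → ℝ,
      Measure.map (fun ω => x ⬝ᵥ g₁ ω) P = gaussianReal 0 (Real.toNNReal (x ⬝ᵥ S₁.mulVec x)))
    (hg₂ : ∀ x : Fin n → ℝ,
      Measure.map (fun ω => x ⬝ᵥ g₂ ω) P = gaussianReal 0 (Real.toNNReal (x ⬝ᵥ S₂.mulVec x)))
    (hindep : IndepFun θ (fun ω => (g₁ ω, g₂ ω)) P)
    (X : Ω → (Fin n → ℝ))
    (hX : ∀ ω, X ω = θ ω • μ + (if θ ω = 1 then g₁ ω else g₂ ω))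
    (x : Fin n → ℝ) :
    subGaussianNorm P (fun ω => x ⬝ᵥ X ω)
      ≤ Real.sqrt (32 / (4 - Real.exp 1)) * Real.sqrt (∫ ω, (x ⬝ᵥ X ω) ^ 2 ∂P) :=
  stmt_8_general P μ S₁ S₂ θ hθmeas hθ1 hθ2 g₁ g₂ hg₁ hg₂ hindep X hX x
end
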